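/- Optimality of the iterative construction: in the point-stabilization algorithm with Ω(0) = {x^d} and Ω(k) = W_k \ (W_0 ∪ ⋯ ∪ W_{k−1}), a state x lies in Ω(k) if and only if the minimum number of steps needed to drive x to x^d (over all control sequences) equals k. Consequently, any stabilizer built by choosing, for each x ∈ Ω(k) with k ≥ 1, a control u(x) with M_F u(x) x ∈ Ω(k−1) ∪ ⋯ ∪ Ω(0) reaching the previous level, drives every state to x^d in the minimum possible time. -/

import Mathlib

open Matrix Kronecker

noncomputable section

/-- Row-major pairing `(i, j) ↦ N * i + j`, matching the standard Kronecker convention. -/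
def kronEquiv (M N : ℕ) : Fin M × Fin N ≃ Fin (M * N) := finProdFinEquiv

/-- Kronecker product of two (column) vectors. -/
def vecKron {M N : ℕ} (u : Fin M → ℝ) (x : Fin N → ℝ) : Fin (M * N) → ℝ :=
  fun k => u ((kronEquiv M N).symm k).1 * x ((kronEquiv M N).symm k).2

/-- `δ_N^i` (0-indexed): the `i`-th column of the identity matrix `I_N`. -/
def eVec (N : ℕ) (i : Fin N) : Fin N → ℝ := fun j => if j = i then 1 else 0

/-- The set `Δ_N` of columns of the identity matrix. -/
def deltaSet (N : ℕ) : Set (Fin N → ℝ) := {x | ∃ i, x = eVec N i}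

/-- A matrix is logical if every column is a standard basis vector. -/
def IsLogical {m n : ℕ} (L : Matrix (Fin m) (Fin n) ℝ) : Prop :=
  ∀ j, ∃ i, (fun k => L k j) = eVec m i

/-- The power-reducing matrix `PR_k = diag(δ_k^1, …, δ_k^k)`: column `j` is `δ_k^j ⊗ δ_k^j`. -/
def PRmat (k : ℕ) : Matrix (Fin (k * k)) (Fin k) ℝ :=
  Matrix.of fun i j => vecKron (eVec k j) (eVec k j) i

lemma stp_dim (n p : ℕ) : p * (Nat.lcm n p / p) = n * (Nat.lcm n p / n) := by
  rw [Nat.mul_div_cancel' (Nat.dvd_lcm_right n p), Nat.mul_div_cancel' (Nat.dvd_lcm_left n p)]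

/-- The semi-tensor product `A ⋉ B = (A ⊗ I_{t/n})(B ⊗ I_{t/p})`, `t = lcm(n,p)`. -/
def stp {m n p q : ℕ} (A : Matrix (Fin m) (Fin n) ℝ) (B : Matrix (Fin p) (Fin q) ℝ) :
    Matrix (Fin (m * (Nat.lcm n p / n))) (Fin (q * (Nat.lcm n p / p))) ℝ :=
  (Matrix.reindex (kronEquiv m _) (kronEquiv n _)
      (A ⊗ₖ (1 : Matrix (Fin (Nat.lcm n p / n)) (Fin (Nat.lcm n p / n)) ℝ))) *
  (Matrix.reindex ((kronEquiv p _).trans (finCongr (stp_dim n p))) (kronEquiv q _)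
      (B ⊗ₖ (1 : Matrix (Fin (Nat.lcm n p / p)) (Fin (Nat.lcm n p / p)) ℝ)))

/-- `x` can be driven to `xd` in exactly `k` steps by some free control sequence. -/
def ReachIn (m n : ℕ) (MF : Matrix (Fin (2 ^ n)) (Fin (2 ^ m * 2 ^ n)) ℝ)
    (k : ℕ) (x xd : Fin (2 ^ n) → ℝ) : Prop :=
  ∃ u : ℕ → Fin (2 ^ m) → ℝ, (∀ t, u t ∈ deltaSet (2 ^ m)) ∧
    ∃ xs : ℕ → Fin (2 ^ n) → ℝ, xs 0 = x ∧
      (∀ t, xs (t + 1) = MF.mulVec (vecKron (u t) (xs t))) ∧ xs k = xd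

/-! Because `x^d ∈ Δ` is a control fixed point, the levels `W k` increase, so `W (k + 1)` is just
the set of states of `Δ` with a one-step transition into `W k`. A logical `M_F` keeps the
trajectory inside `Δ`, and induction then identifies `W k` with the states that reach `x^d` in
exactly `k` steps; removing the earlier levels leaves those whose minimum time is `k`. A state of
`Ω(k+1)` cannot step into `Ω(i)` with `i < k`, as it would then lie in `W (i + 1)`, so a
stabilizer lowers the level by exactly one per step. -/

namespace ControlSystem

variable {α β : Type*}

def ReachesIn (A : Set β) (f : β → α → α) (k : ℕ) (x y : α) : Prop :=
  ∃ u : ℕ → β, (∀ t, u t ∈ A) ∧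
    ∃ xs : ℕ → α, xs 0 = x ∧ (∀ t, xs (t + 1) = f (u t) (xs t)) ∧ xs k = y

variable {A : Set β} {f : β → α → α}

theorem reachesIn_zero_iff (hA : A.Nonempty) {x y : α} : ReachesIn A f 0 x y ↔ x = y := by
  constructor
  · rintro ⟨-, -, xs, rfl, -, rfl⟩
    rfl
  · rintro rfl
    obtain ⟨a, ha⟩ := hA
    exact ⟨fun _ => a, fun _ => ha, fun t => (f a)^[t] x, rfl,
      fun t => Function.iterate_succ_apply' _ _ _, rfl⟩

theorem reachesIn_succ_iff {k : ℕ} {x y : α} :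
    ReachesIn A f (k + 1) x y ↔ ∃ u ∈ A, ReachesIn A f k (f u x) y := by
  constructor
  · rintro ⟨u, hu, xs, rfl, hxs, hk⟩
    exact ⟨u 0, hu 0, fun t => u (t + 1), fun t => hu (t + 1), fun t => xs (t + 1),
      hxs 0, fun t => hxs (t + 1), hk⟩
  · rintro ⟨u₀, hu₀, u, hu, xs, hxs₀, hxs, hk⟩
    refine ⟨Nat.rec u₀ fun t _ => u t, fun t => t.casesOn hu₀ fun t => hu t,
      Nat.rec x fun t _ => xs t, rfl, fun t => ?_, hk⟩
    cases t with
    | zero => exact hxs₀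
    | succ t => exact hxs t

section LevelSets

variable {S : Set α} {xd : α} {W Om : ℕ → Set α}

theorem mem_level_succ_iff
    (hWs : ∀ k, W (k + 1) = {x | x ∈ S ∧ ∃ u ∈ A, f u x ∈ ⋃ i ∈ Finset.range (k + 1), W i})
    {k : ℕ} {x : α} :
    x ∈ W (k + 1) ↔ x ∈ S ∧ ∃ u ∈ A, ∃ i ≤ k, f u x ∈ W i := by
  simp [hWs]

theorem monotone_levels (hxd : xd ∈ S) (hfix : ∃ u ∈ A, f u xd = xd) (hW0 : W 0 = {xd})
    (hWs : ∀ k, W (k + 1) = {x | x ∈ S ∧ ∃ u ∈ A, f u x ∈ ⋃ i ∈ Finset.range (k + 1), W i}) :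
    Monotone W := by
  refine monotone_nat_of_le_succ fun k x hx => ?_
  cases k with
  | zero =>
    obtain ⟨u, hu, hfu⟩ := hfix
    rw [hW0, Set.mem_singleton_iff] at hx
    subst hx
    exact (mem_level_succ_iff hWs).2 ⟨hxd, u, hu, 0, le_rfl, by rw [hfu, hW0]; rfl⟩
  | succ k =>
    obtain ⟨hxS, u, hu, i, hik, hi⟩ := (mem_level_succ_iff hWs).1 hx
    exact (mem_level_succ_iff hWs).2 ⟨hxS, u, hu, i, hik.trans k.le_succ, hi⟩

theorem biUnion_range_succ_eq_of_monotone (hW : Monotone W) (k : ℕ) :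
    ⋃ i ∈ Finset.range (k + 1), W i = W k := by
  rw [← partialSups_eq_biUnion_range, hW.partialSups_eq]

theorem mem_level_iff_reachesIn (hS : ∀ u ∈ A, ∀ x ∈ S, f u x ∈ S) (hxd : xd ∈ S)
    (hfix : ∃ u ∈ A, f u xd = xd) (hW0 : W 0 = {xd})
    (hWs : ∀ k, W (k + 1) = {x | x ∈ S ∧ ∃ u ∈ A, f u x ∈ ⋃ i ∈ Finset.range (k + 1), W i})
    (k : ℕ) {x : α} (hx : x ∈ S) :
    x ∈ W k ↔ ReachesIn A f k x xd := by
  have hA : A.Nonempty := let ⟨u, hu, _⟩ := hfix; ⟨u, hu⟩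
  induction k generalizing x with
  | zero => rw [hW0, Set.mem_singleton_iff, reachesIn_zero_iff hA]
  | succ k ih =>
    rw [hWs, biUnion_range_succ_eq_of_monotone (monotone_levels hxd hfix hW0 hWs),
      reachesIn_succ_iff]
    simp only [Set.mem_ofPred_eq, hx, true_and]
    exact exists_congr fun u => and_congr_right fun hu => ih (hS u hu x hx)

theorem mem_diff_levels_iff (hOm0 : Om 0 = W 0)
    (hOms : ∀ k, Om (k + 1) = W (k + 1) \ ⋃ i ∈ Finset.range (k + 1), W i) (k : ℕ) (x : α) :
    x ∈ Om k ↔ x ∈ W k ∧ ∀ j < k, x ∉ W j := by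
  cases k with
  | zero => simp [hOm0]
  | succ k => simp [hOms]

theorem le_of_step_mem_level
    (hWs : ∀ k, W (k + 1) = {x | x ∈ S ∧ ∃ u ∈ A, f u x ∈ ⋃ i ∈ Finset.range (k + 1), W i})
    (hOms : ∀ k, Om (k + 1) = W (k + 1) \ ⋃ i ∈ Finset.range (k + 1), W i)
    {k i : ℕ} {x : α} (hx : x ∈ Om (k + 1)) {u : β} (hu : u ∈ A) (hux : f u x ∈ W i) :
    k ≤ i := by
  rw [hOms] at hx
  obtain ⟨hxW, hxnW⟩ := hx
  by_contra! hik
  refine hxnW (Set.mem_biUnion (x := i + 1) (by simpa using hik) ?_)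
  exact (mem_level_succ_iff hWs).2 ⟨((mem_level_succ_iff hWs).1 hxW).1, u, hu, i, le_rfl, hux⟩

theorem iterate_feedback_eq_of_mem_diff_level (hW0 : W 0 = {xd})
    (hWs : ∀ k, W (k + 1) = {x | x ∈ S ∧ ∃ u ∈ A, f u x ∈ ⋃ i ∈ Finset.range (k + 1), W i})
    (hOm0 : Om 0 = W 0)
    (hOms : ∀ k, Om (k + 1) = W (k + 1) \ ⋃ i ∈ Finset.range (k + 1), W i) (g : α → β)
    (hg : ∀ k, ∀ x ∈ Om (k + 1), g x ∈ A ∧ f (g x) x ∈ ⋃ i ∈ Finset.range (k + 1), Om i)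
    (k : ℕ) {x : α} (hx : x ∈ Om k) :
    (fun y => f (g y) y)^[k] x = xd := by
  induction k generalizing x with
  | zero => simpa [hOm0, hW0] using hx
  | succ k ih =>
    obtain ⟨hgx, hstep⟩ := hg k x hx
    obtain ⟨i, hik, hi⟩ : ∃ i ≤ k, f (g x) x ∈ Om i := by simpa [Nat.lt_succ_iff] using hstep
    have hiW : f (g x) x ∈ W i := ((mem_diff_levels_iff hOm0 hOms i _).1 hi).1
    obtain rfl : i = k := le_antisymm hik (le_of_step_mem_level hWs hOms hx hgx hiW)
    exact ih hi

end LevelSets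

end ControlSystem

theorem eVec_eq_single (N : ℕ) (i : Fin N) : eVec N i = Pi.single i 1 := by
  funext j
  simp [eVec, Pi.single_apply]

theorem vecKron_eVec_eVec {M N : ℕ} (p : Fin M) (q : Fin N) :
    vecKron (eVec M p) (eVec N q) = eVec (M * N) (kronEquiv M N (p, q)) := by
  funext k
  obtain ⟨⟨a, b⟩, rfl⟩ := (kronEquiv M N).surjective k
  simp only [vecKron, eVec, Equiv.symm_apply_apply, EmbeddingLike.apply_eq_iff_eq,
    Prod.mk.injEq, ite_zero_mul_ite_zero, mul_one]

theorem IsLogical.mulVec_vecKron_mem_deltaSet {P M N : ℕ}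
    {L : Matrix (Fin P) (Fin (M * N)) ℝ} (hL : IsLogical L) {u : Fin M → ℝ} {x : Fin N → ℝ}
    (hu : u ∈ deltaSet M) (hx : x ∈ deltaSet N) : L.mulVec (vecKron u x) ∈ deltaSet P := by
  obtain ⟨p, rfl⟩ := hu
  obtain ⟨q, rfl⟩ := hx
  obtain ⟨i, hi⟩ := hL (kronEquiv M N (p, q))
  exact ⟨i, by rw [vecKron_eVec_eVec, eVec_eq_single, mulVec_single_one, ← hi]; rfl⟩

theorem reachIn_iff_reachesIn {m n : ℕ} (MF : Matrix (Fin (2 ^ n)) (Fin (2 ^ m * 2 ^ n)) ℝ)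
    (k : ℕ) (x xd : Fin (2 ^ n) → ℝ) :
    ReachIn m n MF k x xd ↔
      ControlSystem.ReachesIn (deltaSet (2 ^ m)) (fun u x => MF.mulVec (vecKron u x)) k x xd :=
  Iff.rfl

/-- `Ω(k)` is exactly the set of states whose minimum time to reach
`x^d` is `k`, and any stabilizer stepping each `Ω(k)` into `Ω(k-1) ∪ ⋯ ∪ Ω(0)`
drives every state to `x^d` in the minimum possible time. -/
theorem level_sets_are_minimum_time (m n : ℕ)
    (MF : Matrix (Fin (2 ^ n)) (Fin (2 ^ m * 2 ^ n)) ℝ) (hMF : IsLogical MF)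
    (xd : Fin (2 ^ n) → ℝ) (hxd : xd ∈ deltaSet (2 ^ n))
    (hcfp : ∃ u ∈ deltaSet (2 ^ m), MF.mulVec (vecKron u xd) = xd)
    (W : ℕ → Set (Fin (2 ^ n) → ℝ)) (hW0 : W 0 = {xd})
    (hWs : ∀ k, W (k + 1) = {x | x ∈ deltaSet (2 ^ n) ∧
      ∃ u ∈ deltaSet (2 ^ m),
        MF.mulVec (vecKron u x) ∈ ⋃ i ∈ Finset.range (k + 1), W i})
    (Om : ℕ → Set (Fin (2 ^ n) → ℝ)) (hOm0 : Om 0 = W 0)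
    (hOms : ∀ k, Om (k + 1) = W (k + 1) \ ⋃ i ∈ Finset.range (k + 1), W i) :
    (∀ x ∈ deltaSet (2 ^ n), ∀ k : ℕ,
      (x ∈ Om k ↔ (ReachIn m n MF k x xd ∧ ∀ j < k, ¬ ReachIn m n MF j x xd))) ∧
    (∀ g : (Fin (2 ^ n) → ℝ) → (Fin (2 ^ m) → ℝ),
      (∀ k, ∀ x ∈ Om (k + 1), g x ∈ deltaSet (2 ^ m) ∧
        MF.mulVec (vecKron (g x) x) ∈ ⋃ i ∈ Finset.range (k + 1), Om i) →
      ∀ k, ∀ x ∈ Om k,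
        (fun y => MF.mulVec (vecKron (g y) y))^[k] x = xd) := by
  have hlevel : ∀ k, ∀ x ∈ deltaSet (2 ^ n), x ∈ W k ↔ ReachIn m n MF k x xd := fun k x hx =>
    (ControlSystem.mem_level_iff_reachesIn
      (fun _ hu _ hx => hMF.mulVec_vecKron_mem_deltaSet hu hx) hxd hcfp hW0 hWs k hx).trans
      (reachIn_iff_reachesIn MF k x xd).symm
  refine ⟨fun x hx k => ?_, fun g hg k x hx =>
    ControlSystem.iterate_feedback_eq_of_mem_diff_level hW0 hWs hOm0 hOms g hg k hx⟩
  rw [ControlSystem.mem_diff_levels_iff hOm0 hOms]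
  exact and_congr (hlevel k x hx) (forall₂_congr fun j _ => not_congr (hlevel j x hx))
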